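/- arXiv:1412.0282 — 2 statements merged into one kernel-verified Lean document; each statement's English description precedes it below -/
import Mathlib

section
/- Let e_0, e_1 ∈ ℂ^d with p = ‖e_0‖², q = ‖e_1‖², c = |⟨e_0, e_1⟩|², and suppose p + q > 0. Let σ̃ = (|e_0⟩⟨e_0| + |e_1⟩⟨e_1|)/(p + q). Then the von Neumann entropy of σ̃ equals h(λ̃_+), where λ̃_+ = ½ + √((p − q)² + 4c) / (2(p + q)). -/
/-!
Writing `M` for the `d × 2` matrix with columns `e₀, e₁`, the state is `σ̃ = M Mᴴ / (p + q)`, and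
`X² χ(M Mᴴ) = X^d χ(Mᴴ M)` moves its spectrum, up to zeros, to the `2 × 2` Gram matrix
`[[p, ⟪e₀,e₁⟫], [⟪e₁,e₀⟫, q]] / (p + q)`. Its trace is `1` and its determinant `(pq - c)/(p + q)²`,
so its eigenvalues are `λ̃₊` and `1 - λ̃₊`; zero eigenvalues do not contribute to the entropy.
-/

open scoped InnerProductSpace

/-- The outer product `|x⟩⟨x|` of a vector `x ∈ ℂ^d`: the `d×d` matrix with `(i,j)` entry
`x i * conj (x j)`. -/
noncomputable def outer {d : ℕ} (x : EuclideanSpace ℂ (Fin d)) : Matrix (Fin d) (Fin d) ℂ :=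
  Matrix.of fun i j => x i * (starRingEnd ℂ) (x j)

-- Von Neumann entropy (base 2) of a Hermitian complex matrix, via its eigenvalues
-- counted with multiplicity (and `0` for non-Hermitian matrices).
open scoped Classical in
noncomputable def vnEntropy {k : Type*} [Fintype k] [DecidableEq k] (ρ : Matrix k k ℂ) : ℝ :=
  if h : ρ.IsHermitian then ∑ i, -(h.eigenvalues i * Real.logb 2 (h.eigenvalues i)) else 0

/-- The binary entropy function `h(p) = -p log₂ p - (1-p) log₂ (1-p)`. -/
noncomputable def binH (p : ℝ) : ℝ := -(p * Real.logb 2 p) - (1 - p) * Real.logb 2 (1 - p)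

open Matrix Polynomial

theorem Polynomial.sum_map_roots_eq_of_X_pow_mul_eq {R β : Type*} [CommRing R] [IsDomain R]
    [AddCommMonoid β] {P Q : R[X]} {a b : ℕ} (hP : P ≠ 0) (h : X ^ a * P = X ^ b * Q)
    {g : R → β} (hg : g 0 = 0) : (P.roots.map g).sum = (Q.roots.map g).sum := by
  have hQ : Q ≠ 0 := by
    rintro rfl
    simp [hP, X_ne_zero] at h
  have hroots := congrArg (fun P : R[X] => (P.roots.map g).sum) h
  simpa [roots_mul, hP, hQ, X_ne_zero, roots_X_pow, Multiset.nsmul_singleton, hg] using hroots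

theorem Matrix.IsHermitian.sum_eigenvalues_eq_sum_map_roots_charpoly {𝕜 n β : Type*} [RCLike 𝕜]
    [Fintype n] [DecidableEq n] [AddCommMonoid β] {A : Matrix n n 𝕜} (hA : A.IsHermitian)
    (f : ℝ → β) : ∑ i, f (hA.eigenvalues i) = (A.charpoly.roots.map (f ∘ RCLike.re)).sum := by
  simp [hA.roots_charpoly_eq_eigenvalues, Multiset.map_map]

theorem vnEntropy_eq_binH_of_X_pow_mul_charpoly_eq {k : Type*} [Fintype k] [DecidableEq k]
    {ρ : Matrix k k ℂ} (hρ : ρ.IsHermitian) {a b : ℕ} (t : ℝ)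
    (h : X ^ a * ρ.charpoly = X ^ b * ((X - C (t : ℂ)) * (X - C ((1 - t : ℝ) : ℂ)))) :
    vnEntropy ρ = binH t := by
  rw [vnEntropy, dif_pos hρ,
    hρ.sum_eigenvalues_eq_sum_map_roots_charpoly fun x => -(x * Real.logb 2 x),
    sum_map_roots_eq_of_X_pow_mul_eq ρ.charpoly_monic.ne_zero h (by simp),
    roots_mul (mul_ne_zero (X_sub_C_ne_zero _) (X_sub_C_ne_zero _)), roots_X_sub_C,
    roots_X_sub_C]
  simp [binH, sub_eq_add_neg]

def colMatrix {𝕜 ι n : Type*} (v : n → EuclideanSpace 𝕜 ι) : Matrix ι n 𝕜 :=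
  of fun i j => v j i

theorem conjTranspose_colMatrix_mul_colMatrix {𝕜 ι n : Type*} [RCLike 𝕜] [Fintype ι]
    (v : n → EuclideanSpace 𝕜 ι) : (colMatrix v)ᴴ * colMatrix v = gram 𝕜 v := by
  ext j k
  simp [colMatrix, mul_apply, gram_apply, PiLp.inner_apply, mul_comm]

theorem colMatrix_mul_conjTranspose_colMatrix {d : ℕ} {n : Type*} [Fintype n]
    (v : n → EuclideanSpace ℂ (Fin d)) : colMatrix v * (colMatrix v)ᴴ = ∑ j, outer (v j) := by
  ext i i'
  simp [colMatrix, mul_apply, outer, Matrix.sum_apply]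

theorem Matrix.X_pow_mul_charpoly_smul_mul_conjTranspose {R m n : Type*} [CommRing R] [StarRing R]
    [Fintype m] [DecidableEq m] [Fintype n] [DecidableEq n] (M : Matrix m n R) (r : R) :
    X ^ Fintype.card n * (r • (M * Mᴴ)).charpoly = X ^ Fintype.card m * (r • (Mᴴ * M)).charpoly := by
  simpa [smul_mul, mul_smul] using charpoly_mul_comm' (r • M) Mᴴ

theorem charpoly_smul_gram_pair {𝕜 E : Type*} [RCLike 𝕜] [SeminormedAddCommGroup E]
    [InnerProductSpace 𝕜 E] (x y : E) (r : ℝ) :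
    ((r : 𝕜) • gram 𝕜 ![x, y]).charpoly =
      X ^ 2 - C ((r * (‖x‖ ^ 2 + ‖y‖ ^ 2) : ℝ) : 𝕜) * X
        + C ((r ^ 2 * (‖x‖ ^ 2 * ‖y‖ ^ 2 - ‖⟪x, y⟫_𝕜‖ ^ 2) : ℝ) : 𝕜) := by
  have htrace : ((r : 𝕜) • gram 𝕜 ![x, y]).trace = ((r * (‖x‖ ^ 2 + ‖y‖ ^ 2) : ℝ) : 𝕜) := by
    simp only [trace_fin_two, Matrix.smul_apply, gram_apply, smul_eq_mul, Matrix.cons_val_zero,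
      Matrix.cons_val_one, inner_self_eq_norm_sq_to_K]
    push_cast
    ring
  have hdet : ((r : 𝕜) • gram 𝕜 ![x, y]).det =
      ((r ^ 2 * (‖x‖ ^ 2 * ‖y‖ ^ 2 - ‖⟪x, y⟫_𝕜‖ ^ 2) : ℝ) : 𝕜) := by
    simp only [det_fin_two, Matrix.smul_apply, gram_apply, smul_eq_mul, Matrix.cons_val_zero,
      Matrix.cons_val_one, inner_self_eq_norm_sq_to_K]
    push_cast
    rw [← RCLike.mul_conj, inner_conj_symm]
    ring
  rw [charpoly_fin_two, htrace, hdet]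

theorem half_add_sqrt_div_mul_one_sub {p q c : ℝ} (hc : 0 ≤ c) (hpq : p + q ≠ 0) :
    (1 / 2 + √((p - q) ^ 2 + 4 * c) / (2 * (p + q))) *
        (1 - (1 / 2 + √((p - q) ^ 2 + 4 * c) / (2 * (p + q)))) = (p * q - c) / (p + q) ^ 2 := by
  have hsq : √((p - q) ^ 2 + 4 * c) ^ 2 = (p - q) ^ 2 + 4 * c := Real.sq_sqrt (by positivity)
  field_simp
  linear_combination -hsq

theorem X_sq_mul_charpoly_smul_outer_add_outer {d : ℕ} (e₀ e₁ : EuclideanSpace ℂ (Fin d))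
    {r t : ℝ} (htrace : r * (‖e₀‖ ^ 2 + ‖e₁‖ ^ 2) = 1)
    (hdet : r ^ 2 * (‖e₀‖ ^ 2 * ‖e₁‖ ^ 2 - ‖⟪e₀, e₁⟫_ℂ‖ ^ 2) = t * (1 - t)) :
    X ^ 2 * ((r : ℂ) • (outer e₀ + outer e₁)).charpoly =
      X ^ d * ((X - C (t : ℂ)) * (X - C ((1 - t : ℝ) : ℂ))) := by
  have hgram := charpoly_smul_gram_pair (𝕜 := ℂ) e₀ e₁ r
  simp only [Complex.coe_algebraMap, htrace, hdet] at hgram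
  have hcomm := X_pow_mul_charpoly_smul_mul_conjTranspose
    (colMatrix (![e₀, e₁] : Fin 2 → _)) (r : ℂ)
  rw [conjTranspose_colMatrix_mul_colMatrix, colMatrix_mul_conjTranspose_colMatrix,
    Fin.sum_univ_two, Fintype.card_fin, Fintype.card_fin, hgram] at hcomm
  simp only [Matrix.cons_val_zero, Matrix.cons_val_one] at hcomm
  rw [hcomm]
  simp only [Complex.ofReal_one, Complex.ofReal_mul, Complex.ofReal_sub, map_one, map_mul, map_sub]
  ring

theorem stmt5 (d : ℕ) (e₀ e₁ : EuclideanSpace ℂ (Fin d))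
    (p q c : ℝ) (hp : p = ‖e₀‖ ^ 2) (hq : q = ‖e₁‖ ^ 2)
    (hc : c = ‖⟪e₀, e₁⟫_ℂ‖ ^ 2)
    (hpq : 0 < p + q) :
    vnEntropy ((((p + q)⁻¹ : ℝ) : ℂ) • (outer e₀ + outer e₁)) =
      binH (1 / 2 + Real.sqrt ((p - q) ^ 2 + 4 * c) / (2 * (p + q))) := by
  set t := 1 / 2 + Real.sqrt ((p - q) ^ 2 + 4 * c) / (2 * (p + q))
  have htrace : (p + q)⁻¹ * (‖e₀‖ ^ 2 + ‖e₁‖ ^ 2) = 1 := by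
    rw [← hp, ← hq, inv_mul_cancel₀ hpq.ne']
  have hdet : (p + q)⁻¹ ^ 2 * (‖e₀‖ ^ 2 * ‖e₁‖ ^ 2 - ‖⟪e₀, e₁⟫_ℂ‖ ^ 2) = t * (1 - t) := by
    rw [← hp, ← hq, ← hc, half_add_sqrt_div_mul_one_sub (hc ▸ sq_nonneg _) hpq.ne', div_eq_mul_inv,
      inv_pow, mul_comm]
  have hherm : (outer e₀ + outer e₁).IsHermitian := by
    simpa [colMatrix_mul_conjTranspose_colMatrix, Fin.sum_univ_two] using
      isHermitian_mul_conjTranspose_self (colMatrix ![e₀, e₁])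
  exact vnEntropy_eq_binH_of_X_pow_mul_charpoly_eq (hherm.smul (Complex.conj_ofReal _)) t
    (X_sq_mul_charpoly_smul_outer_add_outer e₀ e₁ htrace hdet)
end

section
/- Let e₀₀⁰, e₀₀¹, e₀₂⁰, e₀₂¹, e₁₁⁰, e₁₁¹, e₁₃⁰, e₁₃¹ be vectors in a complex inner product space, and set f_0 = e₀₀⁰ + e₁₁⁰, f_1 = e₀₀¹ + e₁₁¹, f_2 = e₀₂⁰ + e₁₃⁰, f_3 = e₀₂¹ + e₁₃¹. Assume ‖f_0‖² + ‖f_1‖² = 1 and ‖f_2‖² + ‖f_3‖² = 1, and define p₊₋ = ‖½(f_0 − f_1 + f_2 − f_3)‖² and p₋₊ = ‖½(f_0 + f_1 − f_2 − f_3)‖². Then Re⟨e₀₀⁰, e₁₃¹⟩ ≥ 1 − p₊₋ − p₋₊ − ‖e₀₀⁰‖·‖e₀₂¹‖ − ‖e₁₁⁰‖·‖e₀₂¹‖ − ‖e₁₁⁰‖·‖e₁₃¹‖ − ‖e₀₀¹‖·‖e₀₂⁰‖ − ‖e₀₀¹‖·‖e₁₃⁰‖ − ‖e₁₁¹‖·‖e₀₂⁰‖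 − ‖e₁₁¹‖·‖e₁₃⁰‖. -/
open scoped InnerProductSpace

theorem stmt11 {E : Type*} [NormedAddCommGroup E] [InnerProductSpace ℂ E]
    (e000 e001 e020 e021 e110 e111 e130 e131 : E)
    (f₀ f₁ f₂ f₃ : E)
    (hf₀ : f₀ = e000 + e110) (hf₁ : f₁ = e001 + e111)
    (hf₂ : f₂ = e020 + e130) (hf₃ : f₃ = e021 + e131)
    (h01 : ‖f₀‖ ^ 2 + ‖f₁‖ ^ 2 = 1) (h23 : ‖f₂‖ ^ 2 + ‖f₃‖ ^ 2 = 1)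
    (pPM pMP : ℝ)
    (hpPM : pPM = ‖(1 / 2 : ℂ) • (f₀ - f₁ + f₂ - f₃)‖ ^ 2)
    (hpMP : pMP = ‖(1 / 2 : ℂ) • (f₀ + f₁ - f₂ - f₃)‖ ^ 2) :
    (⟪e000, e131⟫_ℂ).re ≥
      1 - pPM - pMP - ‖e000‖ * ‖e021‖ - ‖e110‖ * ‖e021‖ - ‖e110‖ * ‖e131‖
        - ‖e001‖ * ‖e020‖ - ‖e001‖ * ‖e130‖ - ‖e111‖ * ‖e020‖ - ‖e111‖ * ‖e130‖ := by
  have hsq : ∀ v : E, ‖(1 / 2 : ℂ) • v‖ ^ 2 = (1 / 4) * ‖v‖ ^ 2 := by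
    intro v
    rw [norm_smul]
    norm_num [mul_pow]
  letI : InnerProductSpace ℝ E := InnerProductSpace.complexToReal
  have e : ∀ x : E, ‖x‖ ^ 2 = ⟪x, x⟫_ℝ := fun x => (real_inner_self_eq_norm_sq x).symm
  have hre : (⟪e000, e131⟫_ℂ).re = ⟪e000, e131⟫_ℝ :=
    (real_inner_eq_re_inner ℂ e000 e131).symm
  rw [hpPM, hpMP, hsq, hsq, hre]
  rw [e, e] at h01 h23
  rw [e, e, hf₀, hf₁, hf₂, hf₃] at *
  simp only [inner_add_left, inner_add_right, inner_sub_left, inner_sub_right] at *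
  linarith [real_inner_le_norm e000 e021, real_inner_le_norm e110 e021,
    real_inner_le_norm e110 e131, real_inner_le_norm e001 e020,
    real_inner_le_norm e001 e130, real_inner_le_norm e111 e020,
    real_inner_le_norm e111 e130,
    real_inner_comm e000 e001, real_inner_comm e000 e111,
    real_inner_comm e110 e001, real_inner_comm e110 e111,
    real_inner_comm e000 e020, real_inner_comm e000 e130,
    real_inner_comm e110 e020, real_inner_comm e110 e130,
    real_inner_comm e000 e021, real_inner_comm e000 e131,
    real_inner_comm e110 e021, real_inner_comm e110 e131,
    real_inner_comm e001 e020, real_inner_comm e001 e130,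
    real_inner_comm e111 e020, real_inner_comm e111 e130,
    real_inner_comm e001 e021, real_inner_comm e001 e131,
    real_inner_comm e111 e021, real_inner_comm e111 e131,
    real_inner_comm e020 e021, real_inner_comm e020 e131,
    real_inner_comm e130 e021, real_inner_comm e130 e131]
end
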